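/- For every real number x, ∏_{γ∈C} ⟨xω₁+(8−x)ω₃, γ⟩ = −2¹⁴ · x²(x−8)⁷(x+8)²(x−24)²(x−16)². -/

import Mathlib

open scoped InnerProductSpace

noncomputable section

namespace PasquierF4

/-- ℝ⁴ with its standard Euclidean inner product. -/
abbrev V : Type := EuclideanSpace ℝ (Fin 4)

/-- The standard basis vectors e₁, e₂, e₃, e₄ (indexed by `Fin 4`). -/
def e (i : Fin 4) : V := EuclideanSpace.single i 1

/-- The simple roots of F₄. -/
def α₁ : V := e 1 - e 2
def α₂ : V := e 2 - e 3
def α₃ : V := e 3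
def α₄ : V := (1 / 2 : ℝ) • (e 0 - e 1 - e 2 - e 3)

/-- `rt a b c d` is the vector [a,b,c,d] = aα₁ + bα₂ + cα₃ + dα₄. -/
def rt (a b c d : ℝ) : V := a • α₁ + b • α₂ + c • α₃ + d • α₄

/-- The fundamental weights of F₄. -/
def ω₁ : V := rt 2 3 4 2
def ω₂ : V := rt 3 6 8 4
def ω₃ : V := rt 2 4 6 3
def ω₄ : V := rt 1 2 3 2

/-- The half-sum of positive roots ρ = [8,15,21,11]. -/
def ρ : V := rt 8 15 21 11

/-- The 24 positive roots of F₄. -/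
def PhiPlus : List V :=
  [rt 1 0 0 0, rt 0 1 0 0, rt 0 0 1 0, rt 0 0 0 1, rt 1 1 0 0, rt 0 1 1 0,
   rt 0 0 1 1, rt 1 1 1 0, rt 0 1 1 1, rt 1 1 1 1, rt 0 1 2 0, rt 1 1 2 0,
   rt 0 1 2 1, rt 1 2 2 0, rt 1 1 2 1, rt 0 1 2 2, rt 1 2 2 1, rt 1 1 2 2,
   rt 1 2 3 1, rt 1 2 2 2, rt 1 2 3 2, rt 1 2 4 2, rt 1 3 4 2, rt 2 3 4 2]

/-- The 22 complementary roots: Φ⁺ with α₂ = [0,1,0,0] and α₄ = [0,0,0,1] removed. -/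
def C : List V :=
  [rt 1 0 0 0, rt 0 0 1 0, rt 1 1 0 0, rt 0 1 1 0,
   rt 0 0 1 1, rt 1 1 1 0, rt 0 1 1 1, rt 1 1 1 1, rt 0 1 2 0, rt 1 1 2 0,
   rt 0 1 2 1, rt 1 2 2 0, rt 1 1 2 1, rt 0 1 2 2, rt 1 2 2 1, rt 1 1 2 2,
   rt 1 2 3 1, rt 1 2 2 2, rt 1 2 3 2, rt 1 2 4 2, rt 1 3 4 2, rt 2 3 4 2]

/-!
The weights ω₁ and ω₃ are dual to the simple roots: pairing with `rt a b c d` reads off `a` and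
`c / 2` respectively. Hence ⟨xω₁ + (8 − x)ω₃, [a,b,c,d]⟩ = a x + c (8 − x) / 2, and the product
over C is a product of such linear factors, which collect into the stated polynomial.
-/

lemma inner_rt (a b c d a' b' c' d' : ℝ) :
    ⟪rt a b c d, rt a' b' c' d'⟫_ℝ =
      2 * a * a' + 2 * b * b' + c * c' + d * d'
        - (a * b' + b * a') - (b * c' + c * b') - (c * d' + d * c') / 2 := by
  simp only [rt, α₁, α₂, α₃, α₄, e, PiLp.inner_apply, Fin.sum_univ_four, PiLp.add_apply,
    PiLp.sub_apply, PiLp.smul_apply, PiLp.single_apply, RCLike.inner_apply, Real.ringHom_apply,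
    smul_eq_mul, Fin.isValue, Fin.reduceEq, ↓reduceIte]
  ring

lemma inner_ω₁_rt (a b c d : ℝ) : ⟪ω₁, rt a b c d⟫_ℝ = a := by
  rw [ω₁, inner_rt]
  ring

lemma inner_ω₃_rt (a b c d : ℝ) : ⟪ω₃, rt a b c d⟫_ℝ = c / 2 := by
  rw [ω₃, inner_rt]
  ring

lemma inner_smul_ω₁_add_smul_ω₃_rt (x y a b c d : ℝ) :
    ⟪x • ω₁ + y • ω₃, rt a b c d⟫_ℝ = a * x + c * y / 2 := by
  rw [inner_add_left, real_inner_smul_left, real_inner_smul_left, inner_ω₁_rt, inner_ω₃_rt]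
  ring

/-- ∏_{γ∈C} ⟨xω₁+(8−x)ω₃, γ⟩ = −2¹⁴ · x²(x−8)⁷(x+8)²(x−24)²(x−16)². -/
theorem prod_numerators (x : ℝ) :
    (C.map fun γ => ⟪x • ω₁ + (8 - x) • ω₃, γ⟫_ℝ).prod
      = -2 ^ 14 * (x ^ 2 * (x - 8) ^ 7 * (x + 8) ^ 2 * (x - 24) ^ 2 * (x - 16) ^ 2) := by
  simp only [C, List.map_cons, List.map_nil, List.prod_cons, List.prod_nil,
    inner_smul_ω₁_add_smul_ω₃_rt]
  ring

end PasquierF4
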